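/- Let α = π / (2 arccos(1/√3)), p = (√2 − 1)/(2√2) and t > 0, and let f = f_{α,p,t}. Then f′(t/√3) = 0 and f″(t/√3) = 0; that is, the probability density f has a stationary point at x = t/√3 which is an inflection point and not a local extremum. -/

import Mathlib

/-!
With `θ = arccos (1/√3)` one has `cos θ = 1/√3`, `sin θ = √2/√3`, `cos 2θ = -1/3`, and
`2p - 1 = -1/√2`. Writing `t = √3 u`, the density becomes
`f x = (u/π) ((x - u)² + 2u²) / ((x² - u²)² + 8u⁴)`, and the numerator of `f x - f u` factors
as `-2u² (x - u)³ (x + 3u)`. So `f - f u` has a triple zero at `u = t/√3` with a cubic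
coefficient that does not vanish there: `f'` and `f''` vanish at `u`, and `f - f u` changes sign.
-/

open Real

/-- The mixture-of-asymmetric-Cauchy probability density `f_{α,p,t}`. -/
noncomputable def cauchyMixDensity (α p t x : ℝ) : ℝ :=
  (t * Real.cos (π / (2 * α)) / π) *
    ((x ^ 2 + t ^ 2 + 2 * (2 * p - 1) * x * t * Real.sin (π / (2 * α))) /
      (x ^ 4 + t ^ 4 + 2 * x ^ 2 * t ^ 2 * Real.cos (π / α)))

open Filter Topology

section CubicContact

variable {f h : ℝ → ℝ} {a x₀ : ℝ}

theorem hasDerivAt_of_eq_add_pow_three_mul (hh : Differentiable ℝ h)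
    (hf : ∀ y, f y = a + (y - x₀) ^ 3 * h y) (y : ℝ) :
    HasDerivAt f (3 * (y - x₀) ^ 2 * h y + (y - x₀) ^ 3 * deriv h y) y := by
  rw [show f = fun y => a + (y - x₀) ^ 3 * h y from funext hf]
  exact ((((hasDerivAt_id' y).sub_const x₀).fun_pow 3).fun_mul (hh y).hasDerivAt).const_add a
    |>.congr_deriv (by norm_num)

theorem deriv_eq_zero_of_eq_add_pow_three_mul (hh : Differentiable ℝ h)
    (hf : ∀ y, f y = a + (y - x₀) ^ 3 * h y) : deriv f x₀ = 0 := by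
  simp [(hasDerivAt_of_eq_add_pow_three_mul hh hf x₀).deriv]

theorem deriv_deriv_eq_zero_of_eq_add_pow_three_mul (hh : ContDiff ℝ 2 h)
    (hf : ∀ y, f y = a + (y - x₀) ^ 3 * h y) : deriv (deriv f) x₀ = 0 := by
  have hh₁ : Differentiable ℝ h := hh.differentiable (by norm_num)
  have hderiv : deriv f = fun y => 3 * (y - x₀) ^ 2 * h y + (y - x₀) ^ 3 * deriv h y :=
    funext fun y => (hasDerivAt_of_eq_add_pow_three_mul hh₁ hf y).deriv
  have hsq := ((hasDerivAt_id' x₀).sub_const x₀).fun_pow 2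
  have hcube := ((hasDerivAt_id' x₀).sub_const x₀).fun_pow 3
  rw [hderiv, (((hsq.const_mul 3).fun_mul (hh₁ x₀).hasDerivAt).fun_add
    (hcube.fun_mul (hh.differentiable_deriv_two x₀).hasDerivAt)).deriv]
  simp

theorem not_isLocalMax_of_eq_add_pow_three_mul (hh : ContinuousAt h x₀) (hx₀ : h x₀ ≠ 0)
    (hf : ∀ y, f y = a + (y - x₀) ^ 3 * h y) : ¬ IsLocalMax f x₀ := by
  intro hmax
  have hle : ∀ᶠ y in 𝓝 x₀, (y - x₀) ^ 3 * h y ≤ 0 := hmax.mono fun y hy => by simpa [hf] using hy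
  have hright : h x₀ ≤ 0 := by
    refine le_of_tendsto (hh.mono_left (nhdsWithin_le_nhds (s := Set.Ioi x₀))) ?_
    filter_upwards [nhdsWithin_le_nhds hle, self_mem_nhdsWithin] with y hy hxy
    exact nonpos_of_mul_nonpos_right hy (pow_pos (sub_pos.mpr hxy) 3)
  have hleft : 0 ≤ h x₀ := by
    refine ge_of_tendsto (hh.mono_left (nhdsWithin_le_nhds (s := Set.Iio x₀))) ?_
    filter_upwards [nhdsWithin_le_nhds hle, self_mem_nhdsWithin] with y hy hxy
    exact nonneg_of_mul_nonpos_right hy (Odd.pow_neg (by decide) (sub_neg.mpr hxy))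
  exact hx₀ (le_antisymm hright hleft)

theorem not_isLocalMin_of_eq_add_pow_three_mul (hh : ContinuousAt h x₀) (hx₀ : h x₀ ≠ 0)
    (hf : ∀ y, f y = a + (y - x₀) ^ 3 * h y) : ¬ IsLocalMin f x₀ := fun hmin =>
  not_isLocalMax_of_eq_add_pow_three_mul (f := fun y => -f y) (a := -a) hh.neg (neg_ne_zero.mpr hx₀)
    (fun y => by rw [hf, Pi.neg_apply]; ring) hmin.neg

end CubicContact

theorem cauchyMixDensity_half_angle (θ p t x : ℝ) :
    cauchyMixDensity (π / (2 * θ)) p t x =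
      t * cos θ / π * ((x ^ 2 + t ^ 2 + 2 * (2 * p - 1) * x * t * sin θ) /
        (x ^ 4 + t ^ 4 + 2 * x ^ 2 * t ^ 2 * cos (2 * θ))) := by
  have htwo : 2 * (π / (2 * θ)) = π / θ := by
    rw [mul_div_assoc', mul_div_mul_left _ _ two_ne_zero]
  rw [cauchyMixDensity, htwo, div_div_cancel₀ pi_pos.ne', div_div_cancel₀ pi_pos.ne']

theorem cos_arccos_inv_sqrt_three : cos (arccos (1 / √3)) = 1 / √3 := by
  have h3 : (1 : ℝ) ≤ √3 := by rw [one_le_sqrt]; norm_num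
  have hpos : 0 ≤ 1 / √3 := by positivity
  exact cos_arccos (by linarith) (div_le_one_of_le₀ h3 (by positivity))

theorem sin_arccos_inv_sqrt_three : sin (arccos (1 / √3)) = √2 / √3 := by
  rw [sin_arccos, div_pow, sq_sqrt (by norm_num), ← sqrt_div' _ (by norm_num : (0 : ℝ) ≤ 3)]
  norm_num

theorem cauchyMixDensity_inflection_params (u x : ℝ) :
    cauchyMixDensity (π / (2 * arccos (1 / √3))) ((√2 - 1) / (2 * √2)) (√3 * u) x =
      u / π * (((x - u) ^ 2 + 2 * u ^ 2) / ((x ^ 2 - u ^ 2) ^ 2 + 8 * u ^ 4)) := by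
  have hs : √3 ^ 2 = 3 := sq_sqrt (by norm_num)
  have hs₀ : √3 ≠ 0 := by positivity
  have hr₀ : √2 ≠ 0 := by positivity
  have hcoeff : √3 * u * (1 / √3) / π = u / π := by field_simp
  have hnum : x ^ 2 + (√3 * u) ^ 2 + 2 * (2 * ((√2 - 1) / (2 * √2)) - 1) * x * (√3 * u) *
      (√2 / √3) = (x - u) ^ 2 + 2 * u ^ 2 := by
    field_simp
    linear_combination u ^ 2 * hs
  have hden : x ^ 4 + (√3 * u) ^ 4 + 2 * x ^ 2 * (√3 * u) ^ 2 * (2 * (1 / √3) ^ 2 - 1) =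
      (x ^ 2 - u ^ 2) ^ 2 + 8 * u ^ 4 := by
    field_simp
    linear_combination (u ^ 4 * (√3 ^ 2 + 3) - 2 * x ^ 2 * u ^ 2) * hs
  rw [cauchyMixDensity_half_angle, cos_two_mul, cos_arccos_inv_sqrt_three,
    sin_arccos_inv_sqrt_three, hcoeff, hnum, hden]

theorem cauchyMixDensity_inflection_params_eq_add_pow_three_mul {u : ℝ} (hu : u ≠ 0) (x : ℝ) :
    cauchyMixDensity (π / (2 * arccos (1 / √3))) ((√2 - 1) / (2 * √2)) (√3 * u) x =
      1 / (4 * π * u) +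
        (x - u) ^ 3 * (-(x + 3 * u) / (4 * π * u * ((x ^ 2 - u ^ 2) ^ 2 + 8 * u ^ 4))) := by
  have : (x ^ 2 - u ^ 2) ^ 2 + 8 * u ^ 4 ≠ 0 := by positivity
  rw [cauchyMixDensity_inflection_params]
  field_simp
  ring

/-- For `α = π/(2 arccos(1/√3))`, `p = (√2 − 1)/(2√2)` and
`t > 0`, the density `f = f_{α,p,t}` has a stationary point at `x = t/√3`
(`f′(t/√3) = 0`) with vanishing second derivative (`f″(t/√3) = 0`) which is an
inflection point and not a local extremum. -/
theorem cauchyMix_inflection_point (t : ℝ) (ht : 0 < t) :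
    deriv (cauchyMixDensity (π / (2 * Real.arccos (1 / Real.sqrt 3)))
        ((Real.sqrt 2 - 1) / (2 * Real.sqrt 2)) t) (t / Real.sqrt 3) = 0 ∧
    deriv (deriv (cauchyMixDensity (π / (2 * Real.arccos (1 / Real.sqrt 3)))
        ((Real.sqrt 2 - 1) / (2 * Real.sqrt 2)) t)) (t / Real.sqrt 3) = 0 ∧
    ¬ IsLocalMax (cauchyMixDensity (π / (2 * Real.arccos (1 / Real.sqrt 3)))
        ((Real.sqrt 2 - 1) / (2 * Real.sqrt 2)) t) (t / Real.sqrt 3) ∧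
    ¬ IsLocalMin (cauchyMixDensity (π / (2 * Real.arccos (1 / Real.sqrt 3)))
        ((Real.sqrt 2 - 1) / (2 * Real.sqrt 2)) t) (t / Real.sqrt 3) := by
  obtain ⟨u, hu, rfl⟩ : ∃ u, 0 < u ∧ t = √3 * u := ⟨t / √3, by positivity, by field_simp⟩
  rw [mul_div_cancel_left₀ u (by positivity : √3 ≠ 0)]
  set h : ℝ → ℝ := fun y => -(y + 3 * u) / (4 * π * u * ((y ^ 2 - u ^ 2) ^ 2 + 8 * u ^ 4))
  have hf := cauchyMixDensity_inflection_params_eq_add_pow_three_mul hu.ne'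
  have hh : ContDiff ℝ 2 h := ContDiff.div (by fun_prop) (by fun_prop) fun y => by positivity
  have hhu : h u ≠ 0 := div_ne_zero (by linarith) (by positivity)
  exact ⟨deriv_eq_zero_of_eq_add_pow_three_mul (hh.differentiable (by norm_num)) hf,
    deriv_deriv_eq_zero_of_eq_add_pow_three_mul hh hf,
    not_isLocalMax_of_eq_add_pow_three_mul hh.continuous.continuousAt hhu hf,
    not_isLocalMin_of_eq_add_pow_three_mul hh.continuous.continuousAt hhu hf⟩
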